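/- Let B be a bounded self-adjoint positive semidefinite operator on a Hilbert space X, let c₀ > 0 with c₀·‖B‖ ≤ 1, and set P = I - c₀·B. Then for every real s ≥ 0 and every integer k ≥ 1, the operator norm of B^s·P^k satisfies ‖B^s P^k‖ ≤ s^s · c₀^{-s} · k^{-s}. -/

import Mathlib

/-!
The spectrum of `B` lies in `[0, 1/c₀]`, and the norm of a continuous function of `B` is at most
its supremum over the spectrum, so it suffices to bound `x ^ s * (1 - c₀ x) ^ k` there.
Substituting `y = c₀ x ∈ [0, 1]` and using `1 - y ≤ exp (-y)`, this is at most
`c₀ ^ (-s) * y ^ s * exp (-k y)`, whose maximum over `y ≥ 0` is `c₀ ^ (-s) * (s / k) ^ s`.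
-/

open Real

theorem rpow_mul_exp_neg_mul_le {x s t : ℝ} (hx : 0 ≤ x) (hs : 0 ≤ s) (ht : 0 < t) :
    x ^ s * exp (-(t * x)) ≤ (s / t) ^ s := by
  rcases hs.eq_or_lt with rfl | hs
  · simpa using mul_nonneg ht.le hx
  -- `x ≤ (s / t) * exp (t x / s)`, raised to the power `s`
  have hx_le : x ^ s ≤ (s / t) ^ s * exp (t * x) := by
    calc x ^ s ≤ ((t / s)⁻¹ * exp (t / s * x)) ^ s :=
          rpow_le_rpow hx (le_inv_mul_exp x (by positivity)) hs.le
      _ = (s / t) ^ s * exp (t * x) := by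
          rw [mul_rpow (by positivity) (exp_pos _).le, ← exp_mul, inv_div]
          field_simp
  calc x ^ s * exp (-(t * x)) ≤ (s / t) ^ s * exp (t * x) * exp (-(t * x)) := by gcongr
    _ = (s / t) ^ s := by rw [mul_assoc, ← exp_add, add_neg_cancel, exp_zero, mul_one]

theorem rpow_mul_one_sub_pow_le {y s : ℝ} {k : ℕ} (hy₀ : 0 ≤ y) (hy₁ : y ≤ 1) (hs : 0 ≤ s)
    (hk : 0 < k) : y ^ s * (1 - y) ^ k ≤ (s / k) ^ s := by
  have hk' : (0 : ℝ) < k := by exact_mod_cast hk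
  have h_pow_le : (1 - y) ^ k ≤ exp (-(k * y)) := by
    calc (1 - y) ^ k ≤ exp (-y) ^ k := pow_le_pow_left₀ (by linarith) (one_sub_le_exp_neg y) k
      _ = exp (-(k * y)) := by rw [← exp_nat_mul, mul_neg]
  calc y ^ s * (1 - y) ^ k ≤ y ^ s * exp (-(k * y)) := by gcongr
    _ ≤ (s / k) ^ s := rpow_mul_exp_neg_mul_le hy₀ hs hk'

theorem rpow_mul_one_sub_mul_pow_le {x c s : ℝ} {k : ℕ} (hx : 0 ≤ x) (hc : 0 < c)
    (hcx : c * x ≤ 1) (hs : 0 ≤ s) (hk : 0 < k) :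
    x ^ s * (1 - c * x) ^ k ≤ s ^ s * c ^ (-s) * (k : ℝ) ^ (-s) := by
  have hx_eq : x ^ s = c ^ (-s) * (c * x) ^ s := by
    rw [mul_rpow hc.le hx, ← mul_assoc, ← rpow_add hc, neg_add_cancel, rpow_zero, one_mul]
  calc x ^ s * (1 - c * x) ^ k = c ^ (-s) * ((c * x) ^ s * (1 - c * x) ^ k) := by
        rw [hx_eq, mul_assoc]
    _ ≤ c ^ (-s) * (s / k) ^ s := by
        gcongr
        exact rpow_mul_one_sub_pow_le (by positivity) hcx hs hk
    _ = s ^ s * c ^ (-s) * (k : ℝ) ^ (-s) := by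
        rw [div_rpow hs (Nat.cast_nonneg k), div_eq_mul_inv, ← rpow_neg (Nat.cast_nonneg k)]
        ring

section CStarAlgebra

variable {A : Type*} [CStarAlgebra A] [PartialOrder A] [StarOrderedRing A]

theorem spectrum_subset_Icc_norm {a : A} (ha : 0 ≤ a) : spectrum ℝ a ⊆ Set.Icc 0 ‖a‖ :=
  fun _ hx ↦ ⟨spectrum_nonneg_of_nonneg ha hx, (le_algebraMap_iff_spectrum_le ha.isSelfAdjoint).mp
    ha.isSelfAdjoint.le_algebraMap_norm_self _ hx⟩

theorem norm_rpow_mul_one_sub_smul_pow_le {a : A} (ha : 0 ≤ a) {c : ℝ} (hc : 0 < c)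
    (hca : c * ‖a‖ ≤ 1) {s : ℝ} (hs : 0 ≤ s) {k : ℕ} (hk : 0 < k) :
    ‖a ^ s * (1 - c • a) ^ k‖ ≤ s ^ s * c ^ (-s) * (k : ℝ) ^ (-s) := by
  have h_one_sub : (1 - c • a) ^ k = cfc (fun x : ℝ ↦ (1 - c * x) ^ k) a := by
    rw [cfc_pow .., cfc_sub .., cfc_const_one .., cfc_const_mul .., cfc_id' ..]
  rw [CFC.rpow_eq_cfc_real ha, h_one_sub, ← cfc_mul (fun x ↦ x ^ s) _ a
    ((continuous_id.rpow_const fun _ ↦ Or.inr hs).continuousOn)]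
  refine norm_cfc_le (by positivity) fun x hx ↦ ?_
  obtain ⟨hx₀, hx_le⟩ := spectrum_subset_Icc_norm ha hx
  have hcx : c * x ≤ 1 := (mul_le_mul_of_nonneg_left hx_le hc.le).trans hca
  rw [norm_of_nonneg (by have := sub_nonneg.2 hcx; positivity)]
  exact rpow_mul_one_sub_mul_pow_le hx₀ hc hcx hs hk

end CStarAlgebra

theorem stmt2 {E : Type*} [NormedAddCommGroup E] [InnerProductSpace ℂ E] [CompleteSpace E]
    (B : E →L[ℂ] E) (hBpos : 0 ≤ B)
    (c₀ : ℝ) (hc₀ : 0 < c₀) (hc₀B : c₀ * ‖B‖ ≤ 1)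
    (P : E →L[ℂ] E) (hP : P = 1 - c₀ • B)
    (s : ℝ) (hs : 0 ≤ s) (k : ℕ) (hk : 1 ≤ k) :
    ‖CFC.rpow B s * P ^ k‖ ≤ s ^ s * c₀ ^ (-s) * (k : ℝ) ^ (-s) :=
  hP ▸ norm_rpow_mul_one_sub_smul_pow_le hBpos hc₀ hc₀B hs hk
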